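/- A finite sequence (d_1, …, d_n) of nonnegative integers is the preorder degree sequence of some rooted ordered tree with n nodes if and only if ∑_{i=1}^n d_i = n − 1 and for every 1 ≤ j < n, ∑_{i=1}^j d_i ≥ j. -/

import Mathlib

/-- Ordered rooted (unlabeled) trees. -/
inductive OTree : Type
  | node : List OTree → OTree

mutual
  /-- Preorder degree sequence of an ordered rooted tree. -/
  def OTree.degSeq : OTree → List ℕ
    | .node ts => ts.length :: OTree.degSeqF ts
  /-- Concatenated preorder degree sequences of a forest. -/
  def OTree.degSeqF : List OTree → List ℕ
    | [] => []
    | t :: ts => OTree.degSeq t ++ OTree.degSeqF ts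
end

/-!
Reading a preorder degree sequence of a forest of `k` trees from left to right, after `j`
entries exactly `k + (d₁ + ⋯ + dⱼ) - j` subtrees are still waiting to be visited; this count
stays positive until the sequence ends and is then zero. Conversely, if the first entry `d` of
such a sequence is removed, the rest satisfies the same conditions for `k - 1 + d` trees, so by
induction it is the sequence of a forest, and grafting the first `d` of its trees under a new
root gives a forest of `k` trees with the original sequence.
-/

structure IsForestDegSeq (k : ℕ) (l : List ℕ) : Prop where
  sum_add : l.sum + k = l.length
  lt_sum_take_add : ∀ j < l.length, j < (l.take j).sum + k

namespace IsForestDegSeq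

theorem nil : IsForestDegSeq 0 [] := ⟨rfl, by simp⟩

theorem cons_iff {k d : ℕ} {l : List ℕ} :
    IsForestDegSeq k (d :: l) ↔ 0 < k ∧ IsForestDegSeq (k - 1 + d) l := by
  constructor
  · rintro ⟨hsum, hpre⟩
    have hk : 0 < k := by simpa using hpre 0 (by simp)
    simp only [List.sum_cons, List.length_cons] at hsum
    refine ⟨hk, ⟨by omega, fun j hj => ?_⟩⟩
    have := hpre (j + 1) (by simpa using hj)
    simp only [List.take_succ_cons, List.sum_cons] at this
    omega
  · rintro ⟨hk, hsum, hpre⟩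
    refine ⟨by simp only [List.sum_cons, List.length_cons]; omega, fun j hj => ?_⟩
    cases j with
    | zero => simpa using hk
    | succ j =>
      have := hpre j (by simpa using hj)
      simp only [List.take_succ_cons, List.sum_cons]
      omega

theorem append {i k : ℕ} {a b : List ℕ} (ha : IsForestDegSeq i a) (hb : IsForestDegSeq k b) :
    IsForestDegSeq (i + k) (a ++ b) := by
  obtain ⟨hsa, hpa⟩ := ha
  obtain ⟨hsb, hpb⟩ := hb
  refine ⟨by simp only [List.sum_append, List.length_append]; omega, fun j hj => ?_⟩
  rw [List.take_append, List.sum_append]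
  rcases lt_or_ge j a.length with hja | hja
  · have := hpa j hja
    omega
  · rw [List.take_of_length_le hja]
    have := hpb (j - a.length) (by simp only [List.length_append] at hj; omega)
    omega

end IsForestDegSeq

namespace OTree

theorem degSeqF_append (a b : List OTree) : degSeqF (a ++ b) = degSeqF a ++ degSeqF b := by
  induction a with
  | nil => simp [degSeqF]
  | cons t ts ih => simp [degSeqF, ih]

theorem degSeqF_singleton (t : OTree) : degSeqF [t] = degSeq t := by
  simp [degSeqF]

theorem degSeqF_node_cons (us ts : List OTree) :
    degSeqF (node us :: ts) = us.length :: (degSeqF us ++ degSeqF ts) := by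
  simp [degSeqF, degSeq]

theorem isForestDegSeq_degSeqF : (ts : List OTree) → IsForestDegSeq ts.length (degSeqF ts)
  | [] => IsForestDegSeq.nil
  | node us :: ts => by
    rw [degSeqF_node_cons, IsForestDegSeq.cons_iff, List.length_cons]
    refine ⟨Nat.succ_pos _, ?_⟩
    rw [Nat.add_sub_cancel, add_comm]
    exact (isForestDegSeq_degSeqF us).append (isForestDegSeq_degSeqF ts)

theorem exists_degSeqF_eq_of_isForestDegSeq {k : ℕ} {l : List ℕ} (hl : IsForestDegSeq k l) :
    ∃ ts : List OTree, ts.length = k ∧ degSeqF ts = l := by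
  induction l generalizing k with
  | nil => exact ⟨[], by simpa using hl.sum_add.symm, rfl⟩
  | cons d l ih =>
    obtain ⟨hk, hl'⟩ := IsForestDegSeq.cons_iff.mp hl
    obtain ⟨ts, hlen, hts⟩ := ih hl'
    have hd : d ≤ ts.length := by omega
    refine ⟨node (ts.take d) :: ts.drop d,
      by simp only [List.length_cons, List.length_drop]; omega, ?_⟩
    rw [degSeqF_node_cons, ← degSeqF_append, List.take_append_drop, hts, List.length_take,
      min_eq_left hd]

theorem exists_degSeqF_eq_iff (k : ℕ) (l : List ℕ) :
    (∃ ts : List OTree, ts.length = k ∧ degSeqF ts = l) ↔ IsForestDegSeq k l := by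
  refine ⟨?_, exists_degSeqF_eq_of_isForestDegSeq⟩
  rintro ⟨ts, rfl, rfl⟩
  exact isForestDegSeq_degSeqF ts

theorem exists_degSeq_eq_iff (l : List ℕ) :
    (∃ t : OTree, degSeq t = l) ↔ IsForestDegSeq 1 l := by
  rw [← exists_degSeqF_eq_iff]
  constructor
  · rintro ⟨t, rfl⟩
    exact ⟨[t], rfl, degSeqF_singleton t⟩
  · rintro ⟨ts, hts, rfl⟩
    obtain ⟨t, rfl⟩ := List.length_eq_one_iff.mp hts
    exact ⟨t, (degSeqF_singleton t).symm⟩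

end OTree

/-- A sequence `(d₁, …, dₙ)` of nonnegative integers is the preorder degree sequence of
some rooted ordered tree with `n` nodes iff `∑ dᵢ = n - 1` and every proper prefix
satisfies `∑_{i ≤ j} dᵢ ≥ j`. -/
theorem stmt13 (n : ℕ) (hn : 1 ≤ n) (l : List ℕ) (hl : l.length = n) :
    (∃ t : OTree, OTree.degSeq t = l) ↔
      (l.sum = n - 1 ∧ ∀ j, 1 ≤ j → j < n → j ≤ (l.take j).sum) := by
  subst hl
  rw [OTree.exists_degSeq_eq_iff]
  constructor
  · rintro ⟨hsum, hpre⟩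
    exact ⟨by omega, fun j _ hj => Nat.lt_succ_iff.mp (hpre j hj)⟩
  · rintro ⟨hsum, hpre⟩
    refine ⟨by omega, fun j hj => ?_⟩
    rcases Nat.eq_zero_or_pos j with rfl | hj0
    · simp
    · exact Nat.lt_succ_of_le (hpre j hj0 hj)
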